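/- (q-Bernoulli α,β lemma.) Let A_q(t) = Σ_{n≥0} b_{n,q} t^n/[n]_q! (so that A_q(t)·(e_q(t)−1) = t), and define (α_n), (β_n) by t·(D_q A_q)(t) = (Σ α_n t^n/[n]_q!)·A_q(qt) and A_q(t) = (Σ β_n t^n/[n]_q!)·A_q(qt) in K[[t]]. Then α_0 = 0 and, for all n ≥ 1, α_n = −(1/q) Σ_{k=0}^{n} [n choose k]_q b_{k,q} and β_n = ((q−1)/q) Σ_{k=0}^{n} [n choose k]_q b_{k,q}, while β_0 = 1. In particular α_1 = −1/[2]_q and α_n = −b_{n,q}/q for all n ≥ 2. -/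

import Mathlib

noncomputable section

open Finset MvPolynomial

/-- The `q`-integer `[n]_q = 1 + q + ⋯ + q^(n-1)`. -/
def qInt {K : Type*} [Field K] (q : K) (n : ℕ) : K := ∑ i ∈ Finset.range n, q ^ i

/-- The `q`-factorial `[n]_q! = [1]_q [2]_q ⋯ [n]_q`. -/
def qFact {K : Type*} [Field K] (q : K) (n : ℕ) : K := ∏ k ∈ Finset.range n, qInt q (k + 1)

/-- The `q`-binomial coefficient `[n choose k]_q`. -/
def qChoose {K : Type*} [Field K] (q : K) (n k : ℕ) : K :=
  qFact q n / (qFact q k * qFact q (n - k))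

/-- The partial `q`-derivative in the variable `v` (v = 0 is `x`, v = 1 is `y`),
the linear operator determined by `D_{q,x}(x^m y^l) = [m]_q x^(m-1) y^l` and
`D_{q,y}(x^m y^l) = [l]_q x^m y^(l-1)`. -/
def qDeriv {K : Type*} [Field K] (q : K) (v : Fin 2) (P : MvPolynomial (Fin 2) K) :
    MvPolynomial (Fin 2) K :=
  ∑ m ∈ P.support, monomial (m - Finsupp.single v 1) (P.coeff m * qInt q (m v))

/-- Substitution `x ↦ c·x` in a polynomial in the two variables `x = X 0`, `y = X 1`. -/
def substX {K : Type*} [Field K] (c : K) (P : MvPolynomial (Fin 2) K) :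
    MvPolynomial (Fin 2) K :=
  aeval (fun i : Fin 2 => if i = 0 then C c * X 0 else X 1) P

/-- Substitution `y ↦ c·y` in a polynomial in the two variables `x = X 0`, `y = X 1`. -/
def substY {K : Type*} [Field K] (c : K) (P : MvPolynomial (Fin 2) K) :
    MvPolynomial (Fin 2) K :=
  aeval (fun i : Fin 2 => if i = 0 then X 0 else C c * X 1) P

/-- The 2D `q`-Appell polynomials attached to a coefficient sequence `a`:
`A_{n,q}(x,y) = Σ_{i+j+k=n} ([n]_q!/([i]_q![j]_q![k]_q!)) a_i q^(k(k-1)/2) x^j y^k`. -/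
def appell {K : Type*} [Field K] (q : K) (a : ℕ → K) (n : ℕ) : MvPolynomial (Fin 2) K :=
  ∑ i ∈ Finset.range (n + 1), ∑ j ∈ Finset.range (n + 1 - i),
    monomial (Finsupp.single (0 : Fin 2) j + Finsupp.single (1 : Fin 2) (n - i - j))
      (qFact q n / (qFact q i * qFact q j * qFact q (n - i - j)) * a i *
        q ^ ((n - i - j) * (n - i - j - 1) / 2))

/-!
Write `A = Σ bₙ tⁿ/[n]_q!` and `e = e_q(t)`, so that `A (e - 1) = t`. The `q`-exponential satisfies
`e(qt) = e(t) + (q - 1) t e(t)`, so substituting `t ↦ qt` in `A (e - 1) = t` and cancelling `e - 1`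
gives `A(qt) (1 + (q - 1)(A + t)) = q A`. Together with `(q - 1) t D_q A = A(qt) - A` this makes both
series explicit: `q Σ αₙ tⁿ/[n]_q! = 1 - (A + t)` and `q Σ βₙ tⁿ/[n]_q! = 1 + (q - 1)(A + t)`, and by
the Bernoulli recurrence the `n`-th coefficient of `A + t` is `Σ_{k ≤ n} [n choose k]_q b_k / [n]_q!`.
-/

section

variable {K : Type*} [Field K] {q : K} {b : ℕ → K}

theorem qInt_two : qInt q 2 = 1 + q := by
  simp [qInt, sum_range_succ]

theorem sub_one_mul_qInt (n : ℕ) : (q - 1) * qInt q n = q ^ n - 1 := by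
  rw [qInt, mul_comm, geom_sum_mul]

@[simp]
theorem qFact_zero : qFact q 0 = 1 := by
  simp [qFact]

theorem qFact_succ (n : ℕ) : qFact q (n + 1) = qFact q n * qInt q (n + 1) :=
  prod_range_succ _ _

@[simp]
theorem qFact_one : qFact q 1 = 1 := by
  simp [qFact, qInt]

theorem qFact_ne_zero (hq : ∀ n : ℕ, 1 ≤ n → qInt q n ≠ 0) (n : ℕ) : qFact q n ≠ 0 :=
  prod_ne_zero_iff.2 fun _ _ => hq _ (Nat.succ_pos _)

theorem qChoose_mul_qFact_mul_qFact (hq : ∀ n : ℕ, 1 ≤ n → qInt q n ≠ 0) (n k : ℕ) :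
    qChoose q n k * (qFact q k * qFact q (n - k)) = qFact q n :=
  div_mul_cancel₀ _ (mul_ne_zero (qFact_ne_zero hq k) (qFact_ne_zero hq _))

theorem qChoose_zero_right (hq : ∀ n : ℕ, 1 ≤ n → qInt q n ≠ 0) (n : ℕ) : qChoose q n 0 = 1 := by
  simp [qChoose, div_self (qFact_ne_zero hq n)]

theorem qChoose_self (hq : ∀ n : ℕ, 1 ≤ n → qInt q n ≠ 0) (n : ℕ) : qChoose q n n = 1 := by
  simp [qChoose, div_self (qFact_ne_zero hq n)]

theorem qChoose_two_one : qChoose q 2 1 = qInt q 2 := by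
  simp [qChoose, qFact_succ, qInt]

/-- The `q`-Bernoulli recurrence, with `b₀ = 1` as its case `n = 1`. -/
def IsQBernoulli (q : K) (b : ℕ → K) : Prop :=
  ∀ n : ℕ, ∑ k ∈ range n, qChoose q n k * b k = if n = 1 then 1 else 0

namespace IsQBernoulli

theorem of_recurrence (hb0 : b 0 = 1)
    (hb : ∀ n : ℕ, 2 ≤ n → ∑ k ∈ range n, qChoose q n k * b k = 0) : IsQBernoulli q b
  | 0 => by simp
  | 1 => by simp [qChoose, hb0]
  | n + 2 => by simpa using hb (n + 2) (by omega)

theorem apply_zero (h : IsQBernoulli q b) : b 0 = 1 := by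
  simpa [qChoose] using h 1

theorem sum_range_succ (h : IsQBernoulli q b) (hq : ∀ n : ℕ, 1 ≤ n → qInt q n ≠ 0) (n : ℕ) :
    ∑ k ∈ range (n + 1), qChoose q n k * b k = (if n = 1 then 1 else 0) + b n := by
  rw [Finset.sum_range_succ, h n, qChoose_self hq, one_mul]

theorem apply_one (h : IsQBernoulli q b) (hq : ∀ n : ℕ, 1 ≤ n → qInt q n ≠ 0) :
    b 1 = -(1 / qInt q 2) := by
  have h2 := h 2
  rw [Finset.sum_range_succ, sum_range_one, qChoose_zero_right hq, qChoose_two_one,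
    h.apply_zero, if_neg (by omega)] at h2
  have := hq 2 (by omega)
  field_simp
  linear_combination h2

end IsQBernoulli

namespace PowerSeries

/-- The `q`-exponential generating function of `a`; `qEGF q 1` is `e_q`. -/
def qEGF (q : K) (a : ℕ → K) : PowerSeries K :=
  mk fun n => a n / qFact q n

@[simp]
theorem coeff_qEGF (a : ℕ → K) (n : ℕ) : coeff n (qEGF q a) = a n / qFact q n :=
  coeff_mk _ _

theorem rescale_qEGF (a : ℕ → K) : rescale q (qEGF q a) = qEGF q fun n => a n * q ^ n := by
  ext n
  simp only [coeff_rescale, coeff_qEGF]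
  ring

theorem rescale_qEGF_ne_zero {a : ℕ → K} (ha : a 0 ≠ 0) : rescale q (qEGF q a) ≠ 0 :=
  fun h => ha <| by simpa using congrArg (coeff 0) h

theorem X_mul_qEGF_shift (a : ℕ → K) :
    X * qEGF q (fun n => a (n + 1)) = mk fun n => if n = 0 then 0 else a n / qFact q (n - 1) := by
  ext (_ | n)
  · simp
  · simp [coeff_succ_X_mul]

theorem coeff_qEGF_mul (hq : ∀ n : ℕ, 1 ≤ n → qInt q n ≠ 0) (a c : ℕ → K) (n : ℕ) :
    coeff n (qEGF q a * qEGF q c) =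
      (∑ k ∈ range (n + 1), qChoose q n k * a k * c (n - k)) / qFact q n := by
  rw [coeff_mul, Nat.sum_antidiagonal_eq_sum_range_succ_mk, sum_div]
  refine sum_congr rfl fun k _ => ?_
  rw [coeff_qEGF, coeff_qEGF, eq_div_iff (qFact_ne_zero hq n),
    ← qChoose_mul_qFact_mul_qFact hq n k]
  have := qFact_ne_zero hq k
  have := qFact_ne_zero hq (n - k)
  field_simp

/-- The `q`-difference equation `F(qt) = F(t) + (q - 1) t (D_q F)(t)`. -/
theorem rescale_qEGF_eq (hq : ∀ n : ℕ, 1 ≤ n → qInt q n ≠ 0) (a : ℕ → K) :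
    rescale q (qEGF q a) = qEGF q a + C (q - 1) * (X * qEGF q fun n => a (n + 1)) := by
  ext (_ | n)
  · simp [qEGF]
  · have := qFact_ne_zero hq n
    have := hq (n + 1) n.succ_pos
    simp only [coeff_rescale, map_add, coeff_C_mul, coeff_succ_X_mul, coeff_qEGF, qFact_succ]
    field_simp
    linear_combination -a (n + 1) * sub_one_mul_qInt (q := q) (n + 1)

theorem eq_of_C_mul_qEGF_eq (hq : ∀ n : ℕ, 1 ≤ n → qInt q n ≠ 0) {a s : ℕ → K} {d : K}
    (h : C q * qEGF q a = 1 + C d * qEGF q s) (n : ℕ) :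
    q * a n = (if n = 0 then 1 else 0) + d * s n := by
  have := qFact_ne_zero hq n
  have h := congrArg (coeff n) h
  rcases n with _ | n
  · simpa [qEGF] using h
  · simp only [coeff_C_mul, coeff_qEGF, map_add, coeff_one] at h
    field_simp at h
    simpa using h

theorem rescale_mul_one_add_C_mul_add_X (hq : ∀ n : ℕ, 1 ≤ n → qInt q n ≠ 0) {A : K⟦X⟧}
    (hA : A * (qEGF q 1 - 1) = X) :
    rescale q A * (1 + C (q - 1) * (A + X)) = C q * A := by
  have he : rescale q (qEGF q 1) = qEGF q 1 + C (q - 1) * (X * qEGF q 1) :=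
    rescale_qEGF_eq hq 1
  have hA_rescale : rescale q A * (rescale q (qEGF q 1) - 1) = C q * X := by
    rw [← map_one (rescale q), ← map_sub, ← map_mul, hA, rescale_X]
  have he_ne : qEGF q 1 - 1 ≠ 0 := right_ne_zero_of_mul (hA ▸ X_ne_zero)
  refine mul_right_cancel₀ he_ne ?_
  linear_combination (C (q - 1) * rescale q A - C q) * hA - rescale q A * he + hA_rescale

theorem C_mul_eq_one_add_of_eq_mul_rescale (hq : ∀ n : ℕ, 1 ≤ n → qInt q n ≠ 0) {A g : K⟦X⟧}
    (hA : A * (qEGF q 1 - 1) = X) (hA₀ : rescale q A ≠ 0) (h : A = g * rescale q A) :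
    C q * g = 1 + C (q - 1) * (A + X) :=
  mul_left_cancel₀ hA₀ <| by
    linear_combination -rescale_mul_one_add_C_mul_add_X hq hA - C q * h

theorem C_mul_eq_one_sub_of_X_mul_eq_mul_rescale (hq : ∀ n : ℕ, 1 ≤ n → qInt q n ≠ 0)
    (hq1 : q ≠ 1) {a : ℕ → K} {g : K⟦X⟧} (hA : qEGF q a * (qEGF q 1 - 1) = X)
    (hA₀ : rescale q (qEGF q a) ≠ 0)
    (h : X * qEGF q (fun n => a (n + 1)) = g * rescale q (qEGF q a)) :
    C q * g = 1 - (qEGF q a + X) := by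
  have hc : C (q - 1) ≠ (0 : K⟦X⟧) := (map_ne_zero_iff _ C_injective).2 (sub_ne_zero.2 hq1)
  have hC : C (q - 1) = (C q - 1 : K⟦X⟧) := by rw [map_sub, map_one]
  refine mul_left_cancel₀ (mul_ne_zero hc hA₀) ?_
  linear_combination -C q * C (q - 1) * h - C q * rescale_qEGF_eq hq a
    + rescale_mul_one_add_C_mul_add_X hq hA - rescale q (qEGF q a) * hC

theorem _root_.IsQBernoulli.qEGF_mul_qEGF_one_sub_one (hb : IsQBernoulli q b)
    (hq : ∀ n : ℕ, 1 ≤ n → qInt q n ≠ 0) : qEGF q b * (qEGF q 1 - 1) = X := by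
  ext n
  rw [mul_sub, mul_one, map_sub, coeff_qEGF_mul hq, coeff_qEGF, coeff_X]
  simp only [Pi.one_apply, mul_one]
  rw [Finset.sum_range_succ, qChoose_self hq, one_mul, add_div, add_sub_cancel_right, hb n]
  split_ifs with hn
  · simp [hn]
  · simp

theorem _root_.IsQBernoulli.qEGF_add_X (hb : IsQBernoulli q b)
    (hq : ∀ n : ℕ, 1 ≤ n → qInt q n ≠ 0) :
    qEGF q b + X = qEGF q fun n => ∑ k ∈ range (n + 1), qChoose q n k * b k := by
  ext n
  simp only [map_add, coeff_qEGF, coeff_X, hb.sum_range_succ hq]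
  split_ifs with hn
  · simp [hn, add_comm]
  · simp

theorem _root_.IsQBernoulli.q_mul_eq_of_X_mul_qEGF_shift_eq (hb : IsQBernoulli q b)
    (hq : ∀ n : ℕ, 1 ≤ n → qInt q n ≠ 0) (hq1 : q ≠ 1) {α : ℕ → K}
    (h : X * qEGF q (fun n => b (n + 1)) = qEGF q α * rescale q (qEGF q b)) (n : ℕ) :
    q * α n = (if n = 0 then 1 else 0) - ∑ k ∈ range (n + 1), qChoose q n k * b k := by
  have hα := C_mul_eq_one_sub_of_X_mul_eq_mul_rescale hq hq1 (hb.qEGF_mul_qEGF_one_sub_one hq)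
    (rescale_qEGF_ne_zero (by simp [hb.apply_zero])) h
  rw [hb.qEGF_add_X hq] at hα
  have hα' : C q * qEGF q α =
      1 + C (-1) * qEGF q fun n => ∑ k ∈ range (n + 1), qChoose q n k * b k := by
    rw [hα, map_neg, map_one]
    ring
  simpa [sub_eq_add_neg] using eq_of_C_mul_qEGF_eq hq hα' n

theorem _root_.IsQBernoulli.q_mul_eq_of_qEGF_eq_mul_rescale (hb : IsQBernoulli q b)
    (hq : ∀ n : ℕ, 1 ≤ n → qInt q n ≠ 0) {β : ℕ → K}
    (h : qEGF q b = qEGF q β * rescale q (qEGF q b)) (n : ℕ) :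
    q * β n = (if n = 0 then 1 else 0) + (q - 1) * ∑ k ∈ range (n + 1), qChoose q n k * b k := by
  have hβ := C_mul_eq_one_add_of_eq_mul_rescale hq (hb.qEGF_mul_qEGF_one_sub_one hq)
    (rescale_qEGF_ne_zero (by simp [hb.apply_zero])) h
  rw [hb.qEGF_add_X hq] at hβ
  exact eq_of_C_mul_qEGF_eq hq hβ n

end PowerSeries

end

theorem qBernoulli_alpha_beta_general
    {K : Type*} [Field K] (q : K) (hq0 : q ≠ 0) (hq1 : q ≠ 1)
    (hq : ∀ n : ℕ, 1 ≤ n → qInt q n ≠ 0)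
    (b : ℕ → K) (hb0 : b 0 = 1)
    (hb : ∀ n : ℕ, 2 ≤ n → ∑ k ∈ Finset.range n, qChoose q n k * b k = 0)
    (α β : ℕ → K)
    (hα : PowerSeries.mk (fun n => if n = 0 then (0 : K) else b n / qFact q (n - 1)) =
      PowerSeries.mk (fun n => α n / qFact q n) *
        PowerSeries.mk (fun n => b n * q ^ n / qFact q n))
    (hβ : PowerSeries.mk (fun n => b n / qFact q n) =
      PowerSeries.mk (fun n => β n / qFact q n) *
        PowerSeries.mk (fun n => b n * q ^ n / qFact q n)) :
    α 0 = 0 ∧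
    (∀ n : ℕ, 1 ≤ n →
      α n = -(1 / q) * ∑ k ∈ Finset.range (n + 1), qChoose q n k * b k) ∧
    (∀ n : ℕ, 1 ≤ n →
      β n = ((q - 1) / q) * ∑ k ∈ Finset.range (n + 1), qChoose q n k * b k) ∧
    β 0 = 1 ∧
    α 1 = -(1 / qInt q 2) ∧
    (∀ n : ℕ, 2 ≤ n → α n = -(b n) / q) := by
  have hB := IsQBernoulli.of_recurrence hb0 hb
  have hqα := hB.q_mul_eq_of_X_mul_qEGF_shift_eq hq hq1
    (by rw [PowerSeries.X_mul_qEGF_shift, PowerSeries.rescale_qEGF]; exact hα)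
  have hqβ := hB.q_mul_eq_of_qEGF_eq_mul_rescale hq (by rw [PowerSeries.rescale_qEGF]; exact hβ)
  have hs := hB.sum_range_succ hq
  have hαn : ∀ n : ℕ, 1 ≤ n →
      α n = -(1 / q) * ∑ k ∈ Finset.range (n + 1), qChoose q n k * b k := fun n hn => by
    have h := hqα n
    rw [if_neg (by omega)] at h
    field_simp
    linear_combination h
  refine ⟨?_, hαn, fun n hn => ?_, ?_, ?_, fun n hn => ?_⟩
  · have h := hqα 0
    rw [hs, hb0] at h
    simpa [hq0] using h
  · have h := hqβ n
    rw [if_neg (by omega)] at h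
    field_simp
    linear_combination h
  · refine mul_left_cancel₀ hq0 ?_
    simp [hqβ 0, hb0, qChoose_self hq]
  · have h2 := hq 2 (by omega)
    rw [hαn 1 le_rfl, hs, if_pos rfl, hB.apply_one hq]
    rw [qInt_two] at h2 ⊢
    field_simp
    ring
  · rw [hαn n (by omega), hs, if_neg (by omega)]
    ring

/-- `q`-Bernoulli `α`, `β` lemma. -/
theorem qBernoulli_alpha_beta
    {K : Type*} [Field K] [CharZero K] (q : K) (hq0 : q ≠ 0) (hq1 : q ≠ 1)
    (hq : ∀ n : ℕ, 1 ≤ n → qInt q n ≠ 0)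
    (b : ℕ → K) (hb0 : b 0 = 1)
    (hb : ∀ n : ℕ, 2 ≤ n → ∑ k ∈ Finset.range n, qChoose q n k * b k = 0)
    (α β : ℕ → K)
    (hα : PowerSeries.mk (fun n => if n = 0 then (0 : K) else b n / qFact q (n - 1)) =
      PowerSeries.mk (fun n => α n / qFact q n) *
        PowerSeries.mk (fun n => b n * q ^ n / qFact q n))
    (hβ : PowerSeries.mk (fun n => b n / qFact q n) =
      PowerSeries.mk (fun n => β n / qFact q n) *
        PowerSeries.mk (fun n => b n * q ^ n / qFact q n)) :
    α 0 = 0 ∧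
    (∀ n : ℕ, 1 ≤ n →
      α n = -(1 / q) * ∑ k ∈ Finset.range (n + 1), qChoose q n k * b k) ∧
    (∀ n : ℕ, 1 ≤ n →
      β n = ((q - 1) / q) * ∑ k ∈ Finset.range (n + 1), qChoose q n k * b k) ∧
    β 0 = 1 ∧
    α 1 = -(1 / qInt q 2) ∧
    (∀ n : ℕ, 2 ≤ n → α n = -(b n) / q) :=
  qBernoulli_alpha_beta_general q hq0 hq1 hq b hb0 hb α β hα hβ
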